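/- For all real numbers b > 0 and c > 0 with b ≠ 1, the integral ∫₀^∞ (b·e^{-cr} − e^{-r})² r^{-1} dr diverges (equals +∞). -/

import Mathlib

open MeasureTheory Set Filter Topology

/-! The integrand `(b e^{-cr} - e^{-r})² / r` behaves like `(b - 1)² / r` as `r → 0⁺`, and `1 / r`
is not integrable at `0`. -/

theorem lintegral_ofReal_inv_Ioo_zero_eq_top {δ : ℝ} (hδ : 0 < δ) :
    ∫⁻ r in Ioo (0 : ℝ) δ, ENNReal.ofReal r⁻¹ = ⊤ := by
  have h_not_integrable : ¬IntegrableOn (·⁻¹) (Ioo (0 : ℝ) δ) := by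
    rw [← intervalIntegrable_iff_integrableOn_Ioo_of_le hδ.le, intervalIntegrable_inv_iff]
    simp [hδ.ne, hδ.le]
  have h_nonneg : 0 ≤ᵐ[volume.restrict (Ioo (0 : ℝ) δ)] (·⁻¹) := by
    filter_upwards [ae_restrict_mem measurableSet_Ioo] with r hr
    exact inv_nonneg.2 hr.1.le
  by_contra h
  exact h_not_integrable
    ((lintegral_ofReal_ne_top_iff_integrable measurable_inv.aestronglyMeasurable h_nonneg).1 h)

theorem lintegral_ofReal_div_Ioi_zero_eq_top {f : ℝ → ℝ} {ε : ℝ} (hε : 0 < ε)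
    (hf : ∀ᶠ r in 𝓝[>] 0, ε ≤ f r) :
    ∫⁻ r in Ioi (0 : ℝ), ENNReal.ofReal (f r / r) = ⊤ := by
  obtain ⟨δ, hδ, hδf⟩ := mem_nhdsGT_iff_exists_Ioo_subset.1 hf
  refine eq_top_iff.2 ?_
  calc ⊤ = ENNReal.ofReal ε * ∫⁻ r in Ioo (0 : ℝ) δ, ENNReal.ofReal r⁻¹ := by
        rw [lintegral_ofReal_inv_Ioo_zero_eq_top hδ, ENNReal.mul_top (by simpa using hε)]
    _ = ∫⁻ r in Ioo (0 : ℝ) δ, ENNReal.ofReal (ε * r⁻¹) := by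
        rw [← lintegral_const_mul _ measurable_inv.ennreal_ofReal]
        simp_rw [ENNReal.ofReal_mul hε.le]
    _ ≤ ∫⁻ r in Ioo (0 : ℝ) δ, ENNReal.ofReal (f r / r) :=
        setLIntegral_mono' measurableSet_Ioo fun r hr => ENNReal.ofReal_le_ofReal <|
          mul_le_mul_of_nonneg_right (hδf hr) (inv_nonneg.2 hr.1.le)
    _ ≤ ∫⁻ r in Ioi (0 : ℝ), ENNReal.ofReal (f r / r) :=
        lintegral_mono_set Ioo_subset_Ioi_self

theorem radial_integral_diverges (b c : ℝ) (hb1 : b ≠ 1) :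
    ∫⁻ r in Ioi (0 : ℝ),
        ENNReal.ofReal ((b * Real.exp (-(c * r)) - Real.exp (-r)) ^ 2 / r) = ⊤ := by
  have h_lim : Tendsto (fun r => (b * Real.exp (-(c * r)) - Real.exp (-r)) ^ 2) (𝓝[>] 0)
      (𝓝 ((b - 1) ^ 2)) := by
    have h_cont : Continuous fun r => (b * Real.exp (-(c * r)) - Real.exp (-r)) ^ 2 := by
      fun_prop
    simpa using h_cont.continuousWithinAt.tendsto (x := 0) (s := Ioi 0)
  have h_sq_pos : 0 < (b - 1) ^ 2 := sq_pos_of_ne_zero (sub_ne_zero.2 hb1)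
  exact lintegral_ofReal_div_Ioi_zero_eq_top (half_pos h_sq_pos)
    (h_lim.eventually (eventually_ge_nhds (half_lt_self h_sq_pos)))
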